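/- arXiv:1012.5256 — 3 statements merged into one kernel-verified Lean document; each statement's English description precedes it below -/
import Mathlib

section
/- Every symmetric unitary complex N×N matrix S (i.e. S = Sᵀ and S*S = 1) can be written as S = Tᵀ T for some unitary matrix T. -/
/-!
A unitary `S` is normal with spectrum on the unit circle, so `T = S ^ (1/2)`, formed by the
continuous functional calculus with the principal branch of the square root, is unitary and
satisfies `T * T = S`. Since the spectrum of a matrix is finite, `T` is a polynomial in `S`,
hence symmetric along with `S`, and so `Tᵀ * T = T * T = S`.
-/

open Matrix
open scoped Matrix.Norms.L2Operator

open Polynomial in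
/-- On a finite spectrum every function agrees with a Lagrange interpolation polynomial. -/
lemma exists_cfc_eq_aeval_of_finite_spectrum {R A : Type*} {p : A → Prop} [Field R] [StarRing R]
    [MetricSpace R] [IsTopologicalRing R] [ContinuousStar R] [TopologicalSpace A] [Ring A]
    [StarRing A] [Algebra R A] [ContinuousFunctionalCalculus R A p]
    (f : R → R) {a : A} (ha : p a) (hfin : (spectrum R a).Finite) :
    ∃ q : R[X], cfc f a = aeval a q := by
  have : Finite (spectrum R a) := hfin
  obtain ⟨q, hq⟩ := (exists_eval_eq_iff (fun x : spectrum R a ↦ (x : R)) (f ·)).mpr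
    fun x y hxy ↦ by rw [hxy]
  refine ⟨q, ?_⟩
  rw [← cfc_polynomial q a]
  exact cfc_congr fun x hx ↦ (hq ⟨x, hx⟩).symm

lemma Matrix.transpose_aeval {n R α : Type*} [Fintype n] [DecidableEq n] [CommSemiring R]
    [CommSemiring α] [Algebra R α] (A : Matrix n n α) (q : Polynomial R) :
    (Polynomial.aeval A q)ᵀ = Polynomial.aeval Aᵀ q := by
  simp [Polynomial.aeval_eq_sum_range, transpose_sum, transpose_pow]

lemma Matrix.IsSymm.cfc {n : Type*} [Fintype n] [DecidableEq n] {A : Matrix n n ℂ}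
    (hA : A.IsSymm) (f : ℂ → ℂ) : (cfc f A).IsSymm := by
  by_cases hnormal : IsStarNormal A
  · obtain ⟨q, hq⟩ := exists_cfc_eq_aeval_of_finite_spectrum f hnormal A.finite_spectrum
    rw [IsSymm, hq, transpose_aeval, hA.eq]
  · rw [cfc_apply_of_not_predicate A hnormal]
    exact isSymm_zero

section Roots

variable {A : Type*} [CStarAlgebra A] {n : ℕ}

lemma cfc_cpow_inv_natCast_pow {a : A} [IsStarNormal a] (hn : n ≠ 0)
    (hfin : (spectrum ℂ a).Finite) :
    cfc (fun z : ℂ ↦ z ^ (n⁻¹ : ℂ)) a ^ n = a := by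
  rw [← cfc_pow _ n a (hfin.continuousOn _)]
  conv_rhs => rw [← cfc_id' ℂ a]
  exact cfc_congr fun x _ ↦ Complex.cpow_nat_inv_pow x hn

lemma cfc_cpow_inv_natCast_mem_unitary {u : A} (hu : u ∈ unitary A)
    (hfin : (spectrum ℂ u).Finite) :
    cfc (fun z : ℂ ↦ z ^ (n⁻¹ : ℂ)) u ∈ unitary A := by
  have : IsStarNormal u := isStarNormal_of_mem_unitary hu
  rw [cfc_unitary_iff _ u (hf := hfin.continuousOn _)]
  intro x hx
  have hx1 : ‖x‖ = 1 :=
    CStarRing.norm_of_mem_unitary (spectrum_subset_unitary_of_mem_unitary hu hx)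
  rw [RCLike.star_def, Complex.conj_mul', Complex.norm_cpow_inv_nat, hx1]
  simp

end Roots

/-- Every symmetric unitary complex `N × N` matrix `S` (i.e. `S = Sᵀ` and `S` unitary)
can be written as `S = Tᵀ * T` for some unitary matrix `T`. -/
theorem symmetric_unitary_factorization (N : ℕ) (S : Matrix (Fin N) (Fin N) ℂ)
    (hsym : Sᵀ = S) (hu : Sᴴ * S = 1) (hu' : S * Sᴴ = 1) :
    ∃ T : Matrix (Fin N) (Fin N) ℂ,
      Tᴴ * T = 1 ∧ T * Tᴴ = 1 ∧ S = Tᵀ * T := by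
  have hS : S ∈ unitary (Matrix (Fin N) (Fin N) ℂ) := ⟨hu, hu'⟩
  have : IsStarNormal S := isStarNormal_of_mem_unitary hS
  set T := cfc (fun z : ℂ ↦ z ^ ((2 : ℕ)⁻¹ : ℂ)) S
  have hT : T ∈ unitary _ := cfc_cpow_inv_natCast_mem_unitary hS S.finite_spectrum
  refine ⟨T, hT.1, hT.2, ?_⟩
  rw [(IsSymm.cfc hsym _).eq, ← sq, cfc_cpow_inv_natCast_pow two_ne_zero S.finite_spectrum]
end

section
/- Every skew-symmetric unitary complex N×N matrix S with N even can be written as S = Tᵀ J T for some unitary matrix T, where J is the standard symplectic form matrix J = [[0, -1_{N/2}],[1_{N/2}, 0]] (in block form). -/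
/-!
With `⟪x, y⟫ = star x ⬝ᵥ y`, skew-symmetry of `S` gives `⟪x, S ȳ⟫ = -⟪y, S x̄⟫`, in
particular `x ⊥ S x̄`, and unitarity gives `⟪S x̄, S ȳ⟫ = ⟪y, x⟫` and `S conj(S x̄) = -x`.
So one can choose orthonormal `e₁, …, eₙ` one at a time, each new vector orthogonal to all
earlier `eᵢ` and `S ēᵢ` (possible while `2k < 2n`). The rows `e₁, …, eₙ, S ē₁, …, S ēₙ` then form a unitary `T` with
`T̄ S Tᴴ = J`, i.e. `S = Tᵀ J T`.
-/

open Matrix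

section CommRing

variable {ι R : Type*} [Fintype ι] [CommRing R] {S : Matrix ι ι R}

theorem Matrix.dotProduct_mulVec_of_transpose_eq_neg (hS : Sᵀ = -S) (x y : ι → R) :
    x ⬝ᵥ S *ᵥ y = -(y ⬝ᵥ S *ᵥ x) := by
  rw [dotProduct_mulVec, ← mulVec_transpose, hS, neg_mulVec, neg_dotProduct, dotProduct_comm]

variable [StarRing R]

theorem Matrix.map_star_mul_mul_conjTranspose_apply {κ : Type*} (A B : Matrix κ ι R) (k l : κ) :
    (A.map star * S * Bᴴ) k l = star (A k) ⬝ᵥ S *ᵥ star (B l) := by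
  rw [Matrix.mul_assoc]
  rfl

theorem Matrix.mul_conjTranspose_self_apply {κ : Type*} (A : Matrix κ ι R) (k l : κ) :
    (A * Aᴴ) k l = star (A l) ⬝ᵥ A k := by
  rw [mul_apply', dotProduct_comm]
  rfl

variable {κ : Type*} {e : κ → ι → R}

def Matrix.symplecticRows (S : Matrix ι ι R) (e : κ → ι → R) : Matrix (κ ⊕ κ) ι R :=
  of (Sum.elim e fun i => S *ᵥ star (e i))

@[simp]
theorem Matrix.symplecticRows_inl (i : κ) : symplecticRows S e (.inl i) = e i := rfl

@[simp]
theorem Matrix.symplecticRows_inr (i : κ) : symplecticRows S e (.inr i) = S *ᵥ star (e i) := rfl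

variable [DecidableEq ι]

theorem Matrix.star_mulVec_dotProduct_mulVec_of_conjTranspose_mul_self (hS : Sᴴ * S = 1)
    (v w : ι → R) : star (S *ᵥ v) ⬝ᵥ S *ᵥ w = star v ⬝ᵥ w := by
  rw [star_mulVec, dotProduct_mulVec, vecMul_vecMul, hS, vecMul_one]

theorem Matrix.mulVec_star_mulVec_star (hskew : Sᵀ = -S) (hS : Sᴴ * S = 1) (x : ι → R) :
    S *ᵥ star (S *ᵥ star x) = -x := by
  rw [star_mulVec, star_star, ← mulVec_transpose, mulVec_mulVec,
    ← conjTranspose_transpose_eq_transpose_conjTranspose, hskew, conjTranspose_neg,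
    Matrix.mul_neg, mul_eq_one_comm.mp hS, neg_mulVec, one_mulVec]

theorem Matrix.eq_transpose_mul_map_star_mul_mul_conjTranspose_mul {T : Matrix ι ι R}
    (hT : Tᴴ * T = 1) (A : Matrix ι ι R) : A = Tᵀ * (T.map star * A * Tᴴ) * T := by
  have hT' : Tᵀ * T.map star = 1 := by
    rw [← conjTranspose_transpose, ← transpose_mul, hT, transpose_one]
  calc A = (Tᵀ * T.map star) * A * (Tᴴ * T) := by rw [hT, hT', Matrix.one_mul, Matrix.mul_one]
    _ = _ := by simp only [Matrix.mul_assoc]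

variable [DecidableEq κ]

theorem Matrix.star_symplecticRows_dotProduct (hS : Sᴴ * S = 1)
    (horth : ∀ i j, star (e i) ⬝ᵥ e j = if i = j then 1 else 0)
    (hiso : ∀ i j, star (e i) ⬝ᵥ S *ᵥ star (e j) = 0) (k l : κ ⊕ κ) :
    star (symplecticRows S e k) ⬝ᵥ symplecticRows S e l = if k = l then 1 else 0 := by
  have hσe : ∀ i j, star (S *ᵥ star (e i)) ⬝ᵥ e j = 0 := fun i j => by
    rw [star_dotProduct, hiso, star_zero]
  have hσσ : ∀ i j, star (S *ᵥ star (e i)) ⬝ᵥ S *ᵥ star (e j) = if j = i then 1 else 0 :=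
    fun i j => by
      rw [star_mulVec_dotProduct_mulVec_of_conjTranspose_mul_self hS, star_star,
        dotProduct_comm, horth]
  rcases k with i | i <;> rcases l with j | j <;> simp [horth, hiso, hσe, hσσ, eq_comm]

theorem Matrix.symplecticRows_mul_conjTranspose (hS : Sᴴ * S = 1)
    (horth : ∀ i j, star (e i) ⬝ᵥ e j = if i = j then 1 else 0)
    (hiso : ∀ i j, star (e i) ⬝ᵥ S *ᵥ star (e j) = 0) :
    symplecticRows S e * (symplecticRows S e)ᴴ = 1 := by
  ext k l
  simp [mul_conjTranspose_self_apply, star_symplecticRows_dotProduct hS horth hiso, one_apply,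
    eq_comm]

theorem Matrix.map_star_symplecticRows_mul_mul_conjTranspose (hskew : Sᵀ = -S)
    (hS : Sᴴ * S = 1) (horth : ∀ i j, star (e i) ⬝ᵥ e j = if i = j then 1 else 0)
    (hiso : ∀ i j, star (e i) ⬝ᵥ S *ᵥ star (e j) = 0) :
    (symplecticRows S e).map star * S * (symplecticRows S e)ᴴ = fromBlocks 0 (-1) 1 0 := by
  ext k (j | j) <;> rw [map_star_mul_mul_conjTranspose_apply]
  · change star (symplecticRows S e k) ⬝ᵥ symplecticRows S e (.inr j) = _
    rw [star_symplecticRows_dotProduct hS horth hiso]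
    rcases k with i | i <;> simp [one_apply]
  · change star (symplecticRows S e k) ⬝ᵥ S *ᵥ star (S *ᵥ star (e j)) = _
    rw [mulVec_star_mulVec_star hskew hS, ← symplecticRows_inl (S := S) (e := e), dotProduct_neg,
      star_symplecticRows_dotProduct hS horth hiso]
    rcases k with i | i <;> simp [one_apply]

end CommRing

section RCLike

open scoped ComplexOrder

variable {ι 𝕜 : Type*} [Fintype ι] [RCLike 𝕜]

theorem exists_smul_star_dotProduct_self_eq_one {v : ι → 𝕜} (hv : v ≠ 0) :
    ∃ c : 𝕜, star (c • v) ⬝ᵥ (c • v) = 1 := by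
  obtain ⟨r, hr, hrv⟩ := RCLike.pos_iff_exists_ofReal.mp (dotProduct_star_self_pos_iff.mpr hv)
  refine ⟨((Real.sqrt r)⁻¹ : ℝ), ?_⟩
  rw [star_smul, smul_dotProduct, dotProduct_smul, ← hrv]
  simp only [RCLike.star_def, RCLike.conj_ofReal, smul_eq_mul, ← RCLike.ofReal_mul]
  rw [← RCLike.ofReal_one (K := 𝕜)]
  congr 1
  field_simp
  rw [Real.sq_sqrt hr.le]

theorem exists_unit_orthogonal_of_card_lt {κ : Type*} [Fintype κ]
    (w : κ → ι → 𝕜) (h : Fintype.card κ < Fintype.card ι) :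
    ∃ u : ι → 𝕜, star u ⬝ᵥ u = 1 ∧ ∀ i, star (w i) ⬝ᵥ u = 0 := by
  have hker : LinearMap.ker (of fun i => star (w i)).mulVecLin ≠ ⊥ :=
    LinearMap.ker_ne_bot_of_finrank_lt (by simpa using h)
  obtain ⟨v, hv, hv0⟩ := Submodule.exists_mem_ne_zero_of_ne_bot hker
  obtain ⟨c, hc⟩ := exists_smul_star_dotProduct_self_eq_one hv0
  refine ⟨c • v, hc, fun i => ?_⟩
  rw [dotProduct_smul, show star (w i) ⬝ᵥ v = 0 from congrFun hv i, smul_zero]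

theorem exists_orthonormal_isotropic_family {S : Matrix ι ι 𝕜} (hS : Sᵀ = -S) :
    ∀ k, 2 * k ≤ Fintype.card ι → ∃ e : Fin k → ι → 𝕜,
      (∀ i j, star (e i) ⬝ᵥ e j = if i = j then 1 else 0) ∧
      ∀ i j, star (e i) ⬝ᵥ S *ᵥ star (e j) = 0
  | 0, _ => ⟨Fin.elim0, fun i => i.elim0, fun i => i.elim0⟩
  | k + 1, hk => by
    obtain ⟨e, horth, hiso⟩ := exists_orthonormal_isotropic_family hS k (by omega)
    obtain ⟨u, hu, hue, huσe⟩ : ∃ u, star u ⬝ᵥ u = 1 ∧ (∀ i, star (e i) ⬝ᵥ u = 0) ∧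
        ∀ i, star (S *ᵥ star (e i)) ⬝ᵥ u = 0 := by
      obtain ⟨u, hu, h⟩ := exists_unit_orthogonal_of_card_lt
        (Sum.elim e fun i => S *ᵥ star (e i)) (by simp only [Fintype.card_sum, Fintype.card_fin]; omega)
      exact ⟨u, hu, fun i => h (.inl i), fun i => h (.inr i)⟩
    have hue' : ∀ i, star u ⬝ᵥ e i = 0 := fun i => by rw [star_dotProduct, hue, star_zero]
    have hσuu : star u ⬝ᵥ S *ᵥ star u = 0 := by
      linear_combination dotProduct_mulVec_of_transpose_eq_neg hS (star u) (star u) / 2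
    have hσeu : ∀ i, star u ⬝ᵥ S *ᵥ star (e i) = 0 := fun i => by
      rw [star_dotProduct, huσe, star_zero]
    have hσue : ∀ i, star (e i) ⬝ᵥ S *ᵥ star u = 0 := fun i => by
      rw [dotProduct_mulVec_of_transpose_eq_neg hS, hσeu, neg_zero]
    refine ⟨Fin.snoc e u, ?_, ?_⟩
    · simp [Fin.forall_fin_succ', horth, hue, hue', hu, (Fin.castSucc_ne_last _).symm]
    · simp [Fin.forall_fin_succ', hiso, hσuu, hσeu, hσue]

end RCLike

theorem skew_symmetric_unitary_factorization_general (n : ℕ)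
    (S : Matrix (Fin n ⊕ Fin n) (Fin n ⊕ Fin n) ℂ)
    (hskew : Sᵀ = -S) (hu : Sᴴ * S = 1) :
    ∃ T : Matrix (Fin n ⊕ Fin n) (Fin n ⊕ Fin n) ℂ,
      Tᴴ * T = 1 ∧ T * Tᴴ = 1 ∧
      S = Tᵀ * Matrix.fromBlocks (0 : Matrix (Fin n) (Fin n) ℂ) (-1) 1 0 * T := by
  obtain ⟨e, horth, hiso⟩ := exists_orthonormal_isotropic_family hskew n (by simp [two_mul])
  have hTT' := symplecticRows_mul_conjTranspose hu horth hiso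
  have hTT := mul_eq_one_comm.mp hTT'
  refine ⟨symplecticRows S e, hTT, hTT', ?_⟩
  rw [← map_star_symplecticRows_mul_mul_conjTranspose hskew hu horth hiso]
  exact eq_transpose_mul_map_star_mul_mul_conjTranspose_mul hTT S

/-- Every skew-symmetric unitary complex `N × N` matrix `S` with `N` even can be written as
`S = Tᵀ * J * T` for some unitary matrix `T`, where `J = [[0, -1],[1, 0]]` in block form. -/
theorem skew_symmetric_unitary_factorization (n : ℕ)
    (S : Matrix (Fin n ⊕ Fin n) (Fin n ⊕ Fin n) ℂ)
    (hskew : Sᵀ = -S) (hu : Sᴴ * S = 1) (hu' : S * Sᴴ = 1) :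
    ∃ T : Matrix (Fin n ⊕ Fin n) (Fin n ⊕ Fin n) ℂ,
      Tᴴ * T = 1 ∧ T * Tᴴ = 1 ∧
      S = Tᵀ * Matrix.fromBlocks (0 : Matrix (Fin n) (Fin n) ℂ) (-1) 1 0 * T :=
  skew_symmetric_unitary_factorization_general n S hskew hu
end

section
/- Let Φ be the identity (standard) representation of su(N) on ℂ^N and k ⊆ su(N) a Lie subalgebra. Then k = su(N) if and only if the commutant of {A ⊗ 1_N + 1_N ⊗ A : A ∈ k} in M_{N²}(ℂ) has dimension exactly 2. -/
/-!
The commutant always contains `1` and the commutation matrix `K`.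

If `k = su(N)`, then the ℂ-span of `k` together with `1` is all of `M_N(ℂ)`, so the commutant
also commutes with every `A ⊗ B + B ⊗ A`; testing this against matrix units forces every element
of the commutant into `span {1, K}`.

Conversely, let `(vᵢ)` be a basis of `k` and `(Cᵢ)` its dual basis for the form `Re tr (X Y)`,
which is definite on skew-Hermitian matrices. Invariance of the form makes the Casimir tensor
`∑ vᵢ ⊗ Cᵢ` commute with `A ⊗ 1 + 1 ⊗ A` for `A ∈ k`, so a two-dimensional commutant gives
`∑ vᵢ ⊗ Cᵢ = a • 1 + b • K`. Contracting the second factor against `X` gives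
`∑ tr (Cᵢ X) • vᵢ = a tr X • 1 + b • X`. For skew-Hermitian `X` the left side is the orthogonal
projection of `X` onto `k`, which is `X` itself on `k`; hence `b = 1` as soon as `k ≠ 0`, and then
every traceless skew-Hermitian `X` lies in `k`. If `k = 0` the commutant is all of `M_{N²}(ℂ)`.
-/

open Matrix Kronecker

attribute [local instance 100] LieRing.ofAssociativeRing

/-- The commutant (in `M_{N²}(ℂ)`) of the set `{A ⊗ 1 + 1 ⊗ A : A ∈ s}`. -/
noncomputable def tensorCommutant (N : ℕ) (s : Set (Matrix (Fin N) (Fin N) ℂ)) :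
    Submodule ℂ (Matrix (Fin N × Fin N) (Fin N × Fin N) ℂ) where
  carrier := {g | ∀ A ∈ s,
    g * (A ⊗ₖ (1 : Matrix (Fin N) (Fin N) ℂ) + (1 : Matrix (Fin N) (Fin N) ℂ) ⊗ₖ A)
      = (A ⊗ₖ (1 : Matrix (Fin N) (Fin N) ℂ) + (1 : Matrix (Fin N) (Fin N) ℂ) ⊗ₖ A) * g}
  add_mem' := by
    intro a b ha hb A hA
    rw [add_mul, ha A hA, hb A hA, ← mul_add]
  zero_mem' := by
    intro A hA
    simp
  smul_mem' := by
    intro c x hx A hA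
    rw [smul_mul_assoc, mul_smul_comm, hx A hA]

section PartialTrace

variable {m n R : Type*} [Fintype n] [CommRing R]

def partialTraceRight : Matrix (m × n) (m × n) R →ₗ[R] Matrix m m R where
  toFun M := of fun p q => ∑ j, M (p, j) (q, j)
  map_add' M M' := by ext; simp [Finset.sum_add_distrib]
  map_smul' c M := by ext; simp [Finset.mul_sum]

theorem partialTraceRight_kronecker (A : Matrix m m R) (B : Matrix n n R) :
    partialTraceRight (A ⊗ₖ B) = B.trace • A := by
  ext p q
  simp [partialTraceRight, trace, Finset.mul_sum, mul_comm]

end PartialTrace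

section Kronecker

variable {n R : Type*} [DecidableEq n] [CommRing R]

def commutationMatrix (n R : Type*) [DecidableEq n] [Zero R] [One R] :
    Matrix (n × n) (n × n) R :=
  of fun a b => if a = b.swap then 1 else 0

theorem linearIndependent_one_commutationMatrix [Nontrivial R] {i j : n} (hij : i ≠ j) :
    LinearIndependent R ![1, commutationMatrix n R] := by
  refine LinearIndependent.pair_iff.mpr fun a b hab => ⟨?_, ?_⟩
  · simpa [commutationMatrix, one_apply, hij] using congr_fun₂ hab (i, j) (i, j)
  · simpa [commutationMatrix, one_apply, hij] using congr_fun₂ hab (i, j) (j, i)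

def kroneckerSum (A B : Matrix n n R) : Matrix (n × n) (n × n) R :=
  A ⊗ₖ 1 + 1 ⊗ₖ B

theorem kroneckerSum_add (A A' B B' : Matrix n n R) :
    kroneckerSum (A + A') (B + B') = kroneckerSum A B + kroneckerSum A' B' := by
  simp only [kroneckerSum, add_kronecker, kronecker_add]
  abel

theorem kroneckerSum_smul (c : R) (A B : Matrix n n R) :
    kroneckerSum (c • A) (c • B) = c • kroneckerSum A B := by
  simp only [kroneckerSum, smul_kronecker, kronecker_smul, smul_add]

theorem kroneckerSum_one : kroneckerSum (1 : Matrix n n R) 1 = 1 + 1 := by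
  simp only [kroneckerSum, one_kronecker_one]

variable [Fintype n]

theorem commutationMatrix_mul_kronecker (A B : Matrix n n R) :
    commutationMatrix n R * (A ⊗ₖ B) = (B ⊗ₖ A) * commutationMatrix n R := by
  ext ⟨a, b⟩ ⟨c, d⟩
  simp [commutationMatrix, mul_apply, Fintype.sum_prod_type, Prod.ext_iff, ite_and, mul_comm]

theorem commutationMatrix_commute_kroneckerSum (A : Matrix n n R) :
    Commute (commutationMatrix n R) (kroneckerSum A A) := by
  simp only [Commute, SemiconjBy, kroneckerSum, mul_add, add_mul,
    commutationMatrix_mul_kronecker]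
  exact add_comm _ _

theorem kroneckerSum_mul_kroneckerSum (A B : Matrix n n R) :
    kroneckerSum A A * kroneckerSum B B =
      kroneckerSum (A * B) (A * B) + (A ⊗ₖ B + B ⊗ₖ A) := by
  simp only [kroneckerSum, add_mul, mul_add, ← mul_kronecker_mul, Matrix.one_mul, Matrix.mul_one]
  abel

theorem commute_kronecker_add_kronecker {g : Matrix (n × n) (n × n) R}
    (hg : ∀ A, Commute g (kroneckerSum A A)) (A B : Matrix n n R) :
    Commute g (A ⊗ₖ B + B ⊗ₖ A) := by
  have h := ((hg A).mul_right (hg B)).sub_right (hg (A * B))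
  rwa [kroneckerSum_mul_kroneckerSum, add_sub_cancel_left] at h

theorem eq_smul_one_add_smul_commutationMatrix {g : Matrix (n × n) (n × n) R} {i j : n}
    (hij : i ≠ j) (hg : ∀ A B : Matrix n n R, Commute g (A ⊗ₖ B + B ⊗ₖ A)) :
    g = g (i, j) (i, j) • 1 + g (i, j) (j, i) • commutationMatrix n R := by
  ext ⟨y, w⟩ ⟨c, d⟩
  -- the `(i, j)` row of `(E_{iy} ⊗ E_{jw} + E_{jw} ⊗ E_{iy}) g` is the `(y, w)` row of `g`
  have h := congr_fun₂ (hg (single i y 1) (single j w 1)).eq (i, j) (c, d)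
  simp only [single_kronecker_single, mul_add, add_mul, Matrix.add_apply, mul_one] at h
  rw [single_mul_apply_same, single_mul_apply_of_ne _ _ _ _ _ (by simp [hij])] at h
  simp only [mul_apply, single, of_apply, Prod.mk.injEq, ite_and, mul_ite,
    one_mul, mul_zero, Finset.sum_ite_eq, Finset.mem_univ, if_true, add_zero, mul_one] at h
  rw [← h]
  simp only [commutationMatrix, Matrix.add_apply, Matrix.smul_apply, one_apply, of_apply,
    Prod.ext_iff, Prod.swap, smul_eq_mul, mul_ite, mul_one, mul_zero, ite_and]
  split_ifs <;> simp_all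

theorem kronecker_mul_kroneckerSum_sub (A X Y : Matrix n n R) :
    (X ⊗ₖ Y) * kroneckerSum A A - kroneckerSum A A * (X ⊗ₖ Y) =
      (X * A - A * X) ⊗ₖ Y + X ⊗ₖ (Y * A - A * Y) := by
  have hsub_left : (X * A - A * X) ⊗ₖ Y = (X * A) ⊗ₖ Y - (A * X) ⊗ₖ Y := by
    ext; simp [sub_mul]
  have hsub_right : X ⊗ₖ (Y * A - A * Y) = X ⊗ₖ (Y * A) - X ⊗ₖ (A * Y) := by
    ext; simp [mul_sub]
  rw [hsub_left, hsub_right]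
  simp only [kroneckerSum, mul_add, add_mul, ← mul_kronecker_mul, Matrix.mul_one, Matrix.one_mul]
  abel

theorem partialTraceRight_commutationMatrix_mul (X : Matrix n n R) :
    partialTraceRight (commutationMatrix n R * (1 ⊗ₖ X)) = X := by
  ext p q
  simp [partialTraceRight, commutationMatrix, mul_apply, Fintype.sum_prod_type, one_apply,
    Prod.ext_iff, ite_and]

end Kronecker

section SkewHermitian

variable {n : Type*}

theorem exists_skewHermitian_add_I_smul (A : Matrix n n ℂ) :
    ∃ X Y : Matrix n n ℂ, Xᴴ = -X ∧ Yᴴ = -Y ∧ A = X + Complex.I • Y := by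
  refine ⟨(2⁻¹ : ℂ) • (A - Aᴴ), (-Complex.I / 2) • (A + Aᴴ), ?_, ?_, ?_⟩
  · simp only [conjTranspose_smul, conjTranspose_sub, conjTranspose_conjTranspose, star_inv₀,
      star_ofNat]
    module
  · simp only [conjTranspose_smul, conjTranspose_add, conjTranspose_conjTranspose, star_div₀,
      star_neg, Complex.star_def, Complex.conj_I, map_ofNat]
    module
  · match_scalars <;> linear_combination (2⁻¹ : ℂ) * Complex.I_sq

variable [Fintype n] [DecidableEq n]

theorem mem_span_traceless_of_skewHermitian [Nonempty n] {X : Matrix n n ℂ} (hX : Xᴴ = -X) :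
    X ∈ Submodule.span ℂ (insert 1 {A : Matrix n n ℂ | Aᴴ = -A ∧ A.trace = 0}) := by
  set c : ℂ := X.trace / Fintype.card n
  have hc : star c = -c := by
    simp only [c, star_div₀, ← trace_conjTranspose, hX, trace_neg, neg_div]
    simp
  have hX₀ : X - c • 1 ∈ {A : Matrix n n ℂ | Aᴴ = -A ∧ A.trace = 0} := by
    refine ⟨?_, ?_⟩
    · simp [hX, hc, sub_eq_neg_add, add_comm]
    · simp [c, trace_sub, trace_one]
  rw [← sub_add_cancel X (c • 1)]
  exact add_mem (Submodule.subset_span (Set.mem_insert_of_mem _ hX₀))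
    (Submodule.smul_mem _ c (Submodule.subset_span (Set.mem_insert _ _)))

theorem span_traceless_skewHermitian_insert_one [Nonempty n] :
    Submodule.span ℂ (insert 1 {A : Matrix n n ℂ | Aᴴ = -A ∧ A.trace = 0}) = ⊤ := by
  refine Submodule.eq_top_iff'.mpr fun A => ?_
  obtain ⟨X, Y, hX, hY, rfl⟩ := exists_skewHermitian_add_I_smul A
  exact add_mem (mem_span_traceless_of_skewHermitian hX)
    (Submodule.smul_mem _ _ (mem_span_traceless_of_skewHermitian hY))

theorem commute_kroneckerSum_of_traceless_skewHermitian [Nonempty n]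
    {g : Matrix (n × n) (n × n) ℂ}
    (hg : ∀ A : Matrix n n ℂ, Aᴴ = -A → A.trace = 0 → Commute g (kroneckerSum A A))
    (A : Matrix n n ℂ) : Commute g (kroneckerSum A A) := by
  have hA : A ∈ Submodule.span ℂ (insert 1 {A : Matrix n n ℂ | Aᴴ = -A ∧ A.trace = 0}) := by
    rw [span_traceless_skewHermitian_insert_one]
    exact Submodule.mem_top
  induction hA using Submodule.span_induction with
  | mem B hB =>
    rcases hB with rfl | ⟨hB, hB'⟩
    · rw [kroneckerSum_one]
      exact (Commute.one_right g).add_right (.one_right g)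
    · exact hg B hB hB'
  | zero => simp [kroneckerSum]
  | add B C _ _ hB hC => rw [kroneckerSum_add]; exact hB.add_right hC
  | smul c B _ hB => rw [kroneckerSum_smul]; exact hB.smul_right c

end SkewHermitian

namespace Matrix

variable {n : Type*} [Fintype n]

noncomputable def reTraceForm : LinearMap.BilinForm ℝ (Matrix n n ℂ) :=
  (LinearMap.mul ℝ (Matrix n n ℂ)).compr₂ (Complex.reLm ∘ₗ traceLinearMap n ℝ ℂ)

theorem reTraceForm_apply (X Y : Matrix n n ℂ) : reTraceForm X Y = (X * Y).trace.re := rfl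

theorem reTraceForm_comm (X Y : Matrix n n ℂ) : reTraceForm X Y = reTraceForm Y X := by
  rw [reTraceForm_apply, reTraceForm_apply, trace_mul_comm]

theorem reTraceForm_commutator_left (A X Y : Matrix n n ℂ) :
    reTraceForm (A * X - X * A) Y = -reTraceForm X (A * Y - Y * A) := by
  simp only [reTraceForm_apply, Matrix.sub_mul, Matrix.mul_sub, trace_sub, Complex.sub_re,
    Matrix.mul_assoc, trace_mul_comm A (X * Y)]
  ring

theorem trace_mul_eq_ofReal_reTraceForm {X Y : Matrix n n ℂ} (hX : Xᴴ = -X) (hY : Yᴴ = -Y) :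
    (X * Y).trace = reTraceForm X Y := by
  refine (Complex.conj_eq_iff_re.mp ?_).symm
  rw [← Complex.star_def, ← trace_conjTranspose, conjTranspose_mul, hX, hY, neg_mul_neg,
    trace_mul_comm]

open ComplexOrder in
theorem eq_zero_of_reTraceForm_self_eq_zero {X : Matrix n n ℂ} (hX : Xᴴ = -X)
    (h : reTraceForm X X = 0) : X = 0 := by
  have hpos : 0 ≤ (Xᴴ * X).trace := (posSemidef_conjTranspose_mul_self X).trace_nonneg
  rw [← trace_conjTranspose_mul_self_eq_zero_iff]
  apply Complex.ext
  · rw [hX, neg_mul, trace_neg, Complex.neg_re, ← reTraceForm_apply, h, neg_zero, Complex.zero_re]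
  · exact (Complex.nonneg_iff.mp hpos).2.symm

end Matrix

namespace LinearMap.BilinForm

variable {K V W ι : Type*} [Field K] [AddCommGroup V] [Module K V] [AddCommGroup W] [Module K W]
  [Fintype ι] [DecidableEq ι] {B : LinearMap.BilinForm K V}

theorem sum_basis_smul_dualBasis (hB : B.Nondegenerate) (hB' : B.IsSymm) (b : Module.Basis ι K V)
    (x : V) :
    ∑ i, B x (B.dualBasis hB b i) • b i = x := by
  have h := (B.dualBasis hB (B.dualBasis hB b)).sum_repr x
  rwa [funext (dualBasis_repr_apply hB _ x), dualBasis_dualBasis hB hB' b] at h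

theorem sum_map_dualBasis_add_map_eq_zero (hB : B.Nondegenerate) (hB' : B.IsSymm)
    (b : Module.Basis ι K V) {D : Module.End K V} (hD : ∀ x y, B (D x) y = -B x (D y))
    (β : V →ₗ[K] V →ₗ[K] W) :
    ∑ i, (β (D (b i)) (B.dualBasis hB b i) + β (b i) (D (B.dualBasis hB b i))) = 0 := by
  set c := B.dualBasis hB b
  have hb : ∀ x, ∑ j, B x (c j) • b j = x := sum_basis_smul_dualBasis hB hB' b
  have hc : ∀ x, ∑ j, B x (b j) • c j = x := fun x => by
    simpa only [c, dualBasis_dualBasis hB hB' b] using sum_basis_smul_dualBasis hB hB' c x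
  have hDb : ∀ i, β (D (b i)) (c i) = ∑ j, B (D (b i)) (c j) • β (b j) (c i) := fun i => by
    conv_lhs => rw [← hb (D (b i))]
    simp only [map_sum, map_smul, LinearMap.sum_apply, LinearMap.smul_apply]
  have hDc : ∀ i, β (b i) (D (c i)) = ∑ j, B (D (c i)) (b j) • β (b i) (c j) := fun i => by
    conv_lhs => rw [← hc (D (c i))]
    simp only [map_sum, map_smul]
  calc ∑ i, (β (D (b i)) (c i) + β (b i) (D (c i)))
      = ∑ i, ∑ j, (B (D (b j)) (c i) + B (D (c i)) (b j)) • β (b i) (c j) := by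
        simp only [hDb, hDc, add_smul, Finset.sum_add_distrib]
        rw [Finset.sum_comm]
    _ = 0 := by
        refine Finset.sum_eq_zero fun i _ => Finset.sum_eq_zero fun j _ => ?_
        rw [hD, hB'.eq (D (c i))]
        simp

end LinearMap.BilinForm

namespace LieSubalgebra

variable {n : Type*} [Fintype n] [DecidableEq n] (k : LieSubalgebra ℝ (Matrix n n ℂ))

noncomputable def reTraceForm : LinearMap.BilinForm ℝ k :=
  Matrix.reTraceForm.compl₁₂ (k.incl : k →ₗ[ℝ] Matrix n n ℂ) (k.incl : k →ₗ[ℝ] Matrix n n ℂ)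

theorem reTraceForm_apply (X Y : k) :
    k.reTraceForm X Y = Matrix.reTraceForm (X : Matrix n n ℂ) Y :=
  rfl

theorem reTraceForm_isSymm : k.reTraceForm.IsSymm :=
  ⟨fun X Y => Matrix.reTraceForm_comm (X : Matrix n n ℂ) Y⟩

variable {k} (hk : ∀ A ∈ k, Aᴴ = -A)
include hk

theorem reTraceForm_nondegenerate : k.reTraceForm.Nondegenerate := by
  refine (k.reTraceForm_isSymm.isRefl.nondegenerate_iff_separatingLeft).mpr fun X hX => ?_
  exact Subtype.ext (eq_zero_of_reTraceForm_self_eq_zero (hk X X.2) (hX X))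

omit hk in
theorem reTraceForm_ad_left (A X Y : k) :
    k.reTraceForm (LieAlgebra.ad ℝ k A X) Y = -k.reTraceForm X (LieAlgebra.ad ℝ k A Y) := by
  simp only [reTraceForm_apply, LieAlgebra.ad_apply, coe_bracket, Ring.lie_def]
  exact reTraceForm_commutator_left (A : Matrix n n ℂ) X Y

noncomputable def dualFinBasis : Module.Basis (Fin (Module.finrank ℝ k)) ℝ k :=
  k.reTraceForm.dualBasis (reTraceForm_nondegenerate hk) (Module.finBasis ℝ k)

noncomputable def casimir : Matrix (n × n) (n × n) ℂ :=
  ∑ i, (Module.finBasis ℝ k i : Matrix n n ℂ) ⊗ₖ (dualFinBasis hk i : Matrix n n ℂ)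

theorem casimir_commute_kroneckerSum {A : Matrix n n ℂ} (hA : A ∈ k) :
    Commute (casimir hk) (kroneckerSum A A) := by
  set b := Module.finBasis ℝ k
  set D := LieAlgebra.ad ℝ k (-⟨A, hA⟩)
  let β := (kroneckerBilinear (R := ℝ)).compl₁₂ (k.incl : k →ₗ[ℝ] Matrix n n ℂ)
    (k.incl : k →ₗ[ℝ] Matrix n n ℂ)
  have hsummand : ∀ i, (b i : Matrix n n ℂ) ⊗ₖ (dualFinBasis hk i : Matrix n n ℂ) *
      kroneckerSum A A - kroneckerSum A A * (b i ⊗ₖ dualFinBasis hk i) =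
      β (D (b i)) (dualFinBasis hk i) + β (b i) (D (dualFinBasis hk i)) := fun i => by
    rw [kronecker_mul_kroneckerSum_sub]
    simp only [β, D, LinearMap.compl₁₂_apply, LieHom.coe_toLinearMap, coe_incl,
      LieAlgebra.ad_apply, coe_bracket, Ring.lie_def, NegMemClass.coe_neg, neg_mul, mul_neg,
      sub_neg_eq_add, neg_add_eq_sub]
    rfl
  refine sub_eq_zero.mp ?_
  rw [casimir, Finset.sum_mul, Finset.mul_sum, ← Finset.sum_sub_distrib]
  refine (Finset.sum_congr rfl fun i _ => hsummand i).trans ?_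
  exact LinearMap.BilinForm.sum_map_dualBasis_add_map_eq_zero _ k.reTraceForm_isSymm b
    (k.reTraceForm_ad_left _) β

theorem partialTraceRight_casimir_mul {X : Matrix n n ℂ} (hX : Xᴴ = -X) :
    partialTraceRight (casimir hk * (1 ⊗ₖ X)) =
      ∑ i, Matrix.reTraceForm X (dualFinBasis hk i) • (Module.finBasis ℝ k i : Matrix n n ℂ) := by
  simp only [casimir, Finset.sum_mul, ← mul_kronecker_mul, Matrix.mul_one, map_sum,
    partialTraceRight_kronecker]
  refine Finset.sum_congr rfl fun i _ => ?_
  rw [trace_mul_eq_ofReal_reTraceForm (hk _ (dualFinBasis hk i).2) hX, reTraceForm_comm,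
    Complex.coe_smul]

theorem partialTraceRight_casimir_mul_mem {X : Matrix n n ℂ} (hX : Xᴴ = -X) :
    partialTraceRight (casimir hk * (1 ⊗ₖ X)) ∈ k := by
  rw [partialTraceRight_casimir_mul hk hX]
  exact k.sum_mem fun i _ => k.smul_mem _ (Module.finBasis ℝ k i).2

theorem partialTraceRight_casimir_mul_of_mem {X : Matrix n n ℂ} (hX : X ∈ k) :
    partialTraceRight (casimir hk * (1 ⊗ₖ X)) = X := by
  rw [partialTraceRight_casimir_mul hk (hk X hX)]
  have h := congrArg Subtype.val (LinearMap.BilinForm.sum_basis_smul_dualBasis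
    (reTraceForm_nondegenerate hk) k.reTraceForm_isSymm (Module.finBasis ℝ k) ⟨X, hX⟩)
  simp only [AddSubmonoidClass.coe_finsetSum, SetLike.val_smul, reTraceForm_apply] at h
  exact h

theorem mem_of_casimir_mem_span_one_commutationMatrix (hne : ∃ X ∈ k, X ≠ 0 ∧ X.trace = 0)
    (hK : casimir hk ∈ Submodule.span ℂ {1, commutationMatrix n ℂ}) {A : Matrix n n ℂ}
    (hA : Aᴴ = -A) (hA' : A.trace = 0) : A ∈ k := by
  obtain ⟨a, c, hac⟩ := Submodule.mem_span_pair.mp hK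
  have hcontract : ∀ X : Matrix n n ℂ, X.trace = 0 →
      partialTraceRight (casimir hk * (1 ⊗ₖ X)) = c • X := fun X hX => by
    rw [← hac, add_mul, smul_mul_assoc, smul_mul_assoc, Matrix.one_mul, map_add, map_smul,
      map_smul, partialTraceRight_kronecker, partialTraceRight_commutationMatrix_mul, hX,
      zero_smul, smul_zero, zero_add]
  obtain ⟨X₀, hX₀, hX₀_ne, hX₀_tr⟩ := hne
  have hc : c = 1 := by
    have h := hcontract X₀ hX₀_tr
    rw [partialTraceRight_casimir_mul_of_mem hk hX₀] at h
    have h' : (c - 1) • X₀ = 0 := by rw [sub_smul, one_smul, ← h, sub_self]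
    exact sub_eq_zero.mp ((smul_eq_zero.mp h').resolve_right hX₀_ne)
  rw [← one_smul ℂ A, ← hc, ← hcontract A hA']
  exact partialTraceRight_casimir_mul_mem hk hA

end LieSubalgebra

theorem finrank_span_one_commutationMatrix {n : Type*} [DecidableEq n] {i j : n} (hij : i ≠ j) :
    Module.finrank ℂ (Submodule.span ℂ {1, commutationMatrix n ℂ}) = 2 := by
  rw [← Matrix.range_cons_cons_empty, finrank_span_eq_card
    (linearIndependent_one_commutationMatrix hij), Fintype.card_fin]

section TensorCommutant

variable {N : ℕ}

theorem mem_tensorCommutant_iff {s : Set (Matrix (Fin N) (Fin N) ℂ)}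
    {g : Matrix (Fin N × Fin N) (Fin N × Fin N) ℂ} :
    g ∈ tensorCommutant N s ↔ ∀ A ∈ s, Commute g (kroneckerSum A A) :=
  Iff.rfl

theorem span_one_commutationMatrix_le_tensorCommutant (s : Set (Matrix (Fin N) (Fin N) ℂ)) :
    Submodule.span ℂ {1, commutationMatrix (Fin N) ℂ} ≤ tensorCommutant N s := by
  rw [Submodule.span_le]
  rintro g (rfl | rfl) <;> refine mem_tensorCommutant_iff.mpr fun A _ => ?_
  · exact Commute.one_left _
  · exact commutationMatrix_commute_kroneckerSum A

theorem casimir_mem_tensorCommutant {k : LieSubalgebra ℝ (Matrix (Fin N) (Fin N) ℂ)}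
    (hk : ∀ A ∈ k, Aᴴ = -A) : k.casimir hk ∈ tensorCommutant N k :=
  mem_tensorCommutant_iff.mpr fun _ hA => LieSubalgebra.casimir_commute_kroneckerSum hk hA

theorem tensorCommutant_eq_top {s : Set (Matrix (Fin N) (Fin N) ℂ)} (hs : ∀ A ∈ s, A = 0) :
    tensorCommutant N s = ⊤ :=
  eq_top_iff.mpr fun g _ => mem_tensorCommutant_iff.mpr fun A hA => by simp [hs A hA, kroneckerSum]

theorem tensorCommutant_traceless_skewHermitian (hN : 2 ≤ N) :
    tensorCommutant N {A | Aᴴ = -A ∧ A.trace = 0} =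
      Submodule.span ℂ {1, commutationMatrix (Fin N) ℂ} := by
  have : Nonempty (Fin N) := ⟨⟨0, by omega⟩⟩
  refine le_antisymm (fun g hg => ?_) (span_one_commutationMatrix_le_tensorCommutant _)
  have hg_all := commute_kroneckerSum_of_traceless_skewHermitian fun A hA hA' =>
    mem_tensorCommutant_iff.mp hg A ⟨hA, hA'⟩
  rw [eq_smul_one_add_smul_commutationMatrix (i := ⟨0, by omega⟩) (j := ⟨1, by omega⟩)
    (by simp [Fin.ext_iff]) (commute_kronecker_add_kronecker hg_all)]
  exact Submodule.mem_span_pair.mpr ⟨_, _, rfl⟩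

end TensorCommutant

/-- A Lie subalgebra `k ⊆ su(N)` equals `su(N)` iff the commutant of
`{A ⊗ 1 + 1 ⊗ A : A ∈ k}` in `M_{N²}(ℂ)` has dimension exactly `2`. -/
theorem full_controllability_iff_commutant_dim_two (N : ℕ) (hN : 2 ≤ N)
    (k : LieSubalgebra ℝ (Matrix (Fin N) (Fin N) ℂ))
    (hsu : ∀ A ∈ k, Aᴴ = -A ∧ A.trace = 0) :
    (k : Set (Matrix (Fin N) (Fin N) ℂ)) =
        {A : Matrix (Fin N) (Fin N) ℂ | Aᴴ = -A ∧ A.trace = 0} ↔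
      Module.finrank ℂ ↥(tensorCommutant N (k : Set (Matrix (Fin N) (Fin N) ℂ))) = 2 := by
  have hpair : Module.finrank ℂ (Submodule.span ℂ {1, commutationMatrix (Fin N) ℂ}) = 2 :=
    finrank_span_one_commutationMatrix (i := ⟨0, by omega⟩) (j := ⟨1, by omega⟩)
      (by simp [Fin.ext_iff])
  constructor
  · intro hk
    rw [hk, tensorCommutant_traceless_skewHermitian hN, hpair]
  · intro hdim
    have hskew : ∀ A ∈ k, Aᴴ = -A := fun A hA => (hsu A hA).1
    by_cases hk0 : ∀ A ∈ k, A = 0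
    · rw [tensorCommutant_eq_top hk0, finrank_top, Module.finrank_matrix] at hdim
      simp only [Fintype.card_prod, Fintype.card_fin, Module.finrank_self, mul_one] at hdim
      have := Nat.mul_le_mul (Nat.mul_le_mul hN hN) (Nat.mul_le_mul hN hN)
      omega
    · push Not at hk0
      obtain ⟨X₀, hX₀, hX₀_ne⟩ := hk0
      have hspan : Submodule.span ℂ {1, commutationMatrix (Fin N) ℂ} = tensorCommutant N k :=
        Submodule.eq_of_le_of_finrank_le (span_one_commutationMatrix_le_tensorCommutant _)
          (by rw [hdim, hpair])
      refine Set.ext fun A => ⟨hsu A, fun ⟨hA, hA'⟩ => ?_⟩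
      exact LieSubalgebra.mem_of_casimir_mem_span_one_commutationMatrix hskew
        ⟨X₀, hX₀, hX₀_ne, (hsu X₀ hX₀).2⟩ (hspan ▸ casimir_mem_tensorCommutant hskew) hA hA'
end
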